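/- arXiv:2605.22737 — 4 statements merged into one kernel-verified Lean document; each statement's English description precedes it below -/
import Mathlib

section
/- Let π_rel be a fully supported probability distribution on a finite set Y, v : Y → ℝ, η > 0, and define the tilted distribution π_eff,η(y) ∝ π_rel(y)·exp(η·v(y)). If KL(π_eff,η ‖ π_rel) = ρ, then π_eff,η maximizes E_{y∼π}[v(y)] over all probability distributions π on Y satisfying KL(π ‖ π_rel) ≤ ρ. -/
open Real Finset

/-- If the tilted distribution exactly saturates the KL budget `ρ`, then it
maximizes expected value over the KL ball of radius `ρ`. -/
theorem stmt_4 {Y : Type*} [Fintype Y] [Nonempty Y]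
    (πrel : Y → ℝ) (hrel0 : ∀ y, 0 < πrel y) (hrel1 : ∑ y, πrel y = 1)
    (v : Y → ℝ) (η : ℝ) (hη : 0 < η) (ρ : ℝ) (hρ : 0 ≤ ρ)
    (πeff : Y → ℝ)
    (hπeff : ∀ y, πeff y = πrel y * Real.exp (η * v y)
        / ∑ y', πrel y' * Real.exp (η * v y'))
    (hKL : (∑ y, πeff y * Real.log (πeff y / πrel y)) = ρ) :
    ∀ p : Y → ℝ, (∀ y, 0 ≤ p y) → (∑ y, p y = 1) →
      (∑ y, p y * Real.log (p y / πrel y)) ≤ ρ →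
      (∑ y, p y * v y) ≤ ∑ y, πeff y * v y := by
  intro p hp0 hp1 hpKL
  set Z := ∑ y', πrel y' * Real.exp (η * v y') with hZdef
  have hZ : 0 < Z :=
    Finset.sum_pos (fun y _ => mul_pos (hrel0 y) (Real.exp_pos _)) Finset.univ_nonempty
  have heffpos : ∀ y, 0 < πeff y := fun y => by
    rw [hπeff]; exact div_pos (mul_pos (hrel0 y) (Real.exp_pos _)) hZ
  have heff1 : ∑ y, πeff y = 1 := by
    simp only [hπeff]; rw [← Finset.sum_div, ← hZdef, div_self hZ.ne']
  have hlograt : ∀ y, Real.log (πeff y / πrel y) = η * v y - Real.log Z := by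
    intro y
    have h1 : πeff y / πrel y = Real.exp (η * v y) / Z := by
      rw [hπeff]; rw [div_eq_div_iff (hrel0 y).ne' hZ.ne']; field_simp
    rw [h1, Real.log_div (Real.exp_pos _).ne' hZ.ne', Real.log_exp]
  -- pointwise decomposition for any nonnegative q
  have key : ∀ (q : Y → ℝ), (∀ y, 0 ≤ q y) → ∀ y,
      q y * Real.log (q y / πrel y) - q y * Real.log (q y / πeff y)
        = q y * (η * v y - Real.log Z) := by
    intro q hq y
    rcases eq_or_lt_of_le (hq y) with h | h
    · simp [← h]
    · rw [← hlograt y, Real.log_div h.ne' (hrel0 y).ne',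
        Real.log_div h.ne' (heffpos y).ne', Real.log_div (heffpos y).ne' (hrel0 y).ne']
      ring
  -- summed identity
  have hid : ∀ (q : Y → ℝ), (∀ y, 0 ≤ q y) → (∑ y, q y = 1) →
      η * (∑ y, q y * v y) =
        (∑ y, q y * Real.log (q y / πrel y)) - (∑ y, q y * Real.log (q y / πeff y))
          + Real.log Z := by
    intro q hq hq1
    have h1 : ∑ y, (q y * Real.log (q y / πrel y) - q y * Real.log (q y / πeff y))
        = ∑ y, q y * (η * v y - Real.log Z) :=
      Finset.sum_congr rfl (fun y _ => key q hq y)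
    have h2 : ∑ y, q y * (η * v y - Real.log Z)
        = η * (∑ y, q y * v y) - Real.log Z := by
      simp only [mul_sub]
      rw [Finset.sum_sub_distrib, ← Finset.sum_mul, hq1, one_mul, Finset.mul_sum]
      congr 1
      exact Finset.sum_congr rfl (fun y _ => by ring)
    rw [Finset.sum_sub_distrib] at h1
    linarith [h1, h2]
  -- Gibbs: KL(p ‖ πeff) ≥ 0
  have hKLnn : 0 ≤ ∑ y, p y * Real.log (p y / πeff y) := by
    have hpt : ∀ y, p y - πeff y ≤ p y * Real.log (p y / πeff y) := by
      intro y
      rcases eq_or_lt_of_le (hp0 y) with h | h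
      · simp [← h]; exact (heffpos y).le
      · have hlog := Real.log_le_sub_one_of_pos (div_pos (heffpos y) h)
        rw [Real.log_div (heffpos y).ne' h.ne'] at hlog
        rw [Real.log_div h.ne' (heffpos y).ne']
        have hc : p y * (πeff y / p y) = πeff y := mul_div_cancel₀ _ h.ne'
        nlinarith [hlog, h, hc]
    calc (0:ℝ) = ∑ y, (p y - πeff y) := by
          rw [Finset.sum_sub_distrib, hp1, heff1, sub_self]
      _ ≤ _ := Finset.sum_le_sum fun y _ => hpt y
  -- KL(πeff ‖ πeff) = 0
  have hself : ∑ y, πeff y * Real.log (πeff y / πeff y) = 0 := by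
    apply Finset.sum_eq_zero
    intro y _
    rw [div_self (heffpos y).ne', Real.log_one, mul_zero]
  have heq := hid πeff (fun y => (heffpos y).le) heff1
  rw [hKL, hself, sub_zero] at heq
  have hle := hid p hp0 hp1
  have : η * (∑ y, p y * v y) ≤ η * (∑ y, πeff y * v y) := by
    rw [heq, hle]; linarith
  exact le_of_mul_le_mul_left this hη
end

section
/- Let π_ref be a fully supported probability distribution on a finite set Y, v : Y → ℝ, λ > 0, and define π_rel,λ(y) ∝ π_ref(y)·exp(−λ·v(y)). If KL(π_rel,λ ‖ π_ref) = ε, then π_rel,λ minimizes E_{y∼π}[v(y)] over all probability distributions π on Y satisfying KL(π ‖ π_ref) ≤ ε. -/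
open Real Finset

/-- Gibbs' inequality. -/
lemma gibbs_aux {Y : Type*} [Fintype Y] (p q : Y → ℝ) (hp : ∀ y, 0 ≤ p y)
    (hq : ∀ y, 0 < q y) (hsum : ∑ y, p y = ∑ y, q y) :
    0 ≤ ∑ y, p y * Real.log (p y / q y) := by
  have key : ∀ y, p y - q y ≤ p y * Real.log (p y / q y) := by
    intro y
    rcases eq_or_lt_of_le (hp y) with h | h
    · simp [← h]
      linarith [(hq y).le]
    · have h1 : Real.log (q y / p y) ≤ q y / p y - 1 :=
        Real.log_le_sub_one_of_pos (div_pos (hq y) h)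
      have h2 : Real.log (q y / p y) = -Real.log (p y / q y) := by
        rw [← Real.log_inv, inv_div]
      have h3 : 1 - q y / p y ≤ Real.log (p y / q y) := by linarith
      have := mul_le_mul_of_nonneg_left h3 h.le
      have hne : p y ≠ 0 := ne_of_gt h
      calc p y - q y = p y * (1 - q y / p y) := by field_simp
        _ ≤ p y * Real.log (p y / q y) := this
  calc (0:ℝ) = ∑ y, (p y - q y) := by rw [Finset.sum_sub_distrib, hsum]; ring
    _ ≤ _ := Finset.sum_le_sum fun y _ => key y

/-- If the negatively tilted distribution exactly saturates the KL budget `ε`,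
then it minimizes expected value over the KL ball of radius `ε`. -/
theorem stmt_5 {Y : Type*} [Fintype Y] [Nonempty Y]
    (πref : Y → ℝ) (href0 : ∀ y, 0 < πref y) (href1 : ∑ y, πref y = 1)
    (v : Y → ℝ) (lam : ℝ) (hlam : 0 < lam) (ε : ℝ) (hε : 0 ≤ ε)
    (πrel : Y → ℝ)
    (hπrel : ∀ y, πrel y = πref y * Real.exp (-lam * v y)
        / ∑ y', πref y' * Real.exp (-lam * v y'))
    (hKL : (∑ y, πrel y * Real.log (πrel y / πref y)) = ε) :
    ∀ p : Y → ℝ, (∀ y, 0 ≤ p y) → (∑ y, p y = 1) →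
      (∑ y, p y * Real.log (p y / πref y)) ≤ ε →
      (∑ y, πrel y * v y) ≤ ∑ y, p y * v y := by
  intro p hp hp1 hpKL
  set Z : ℝ := ∑ y', πref y' * Real.exp (-lam * v y') with hZ
  have hZpos : 0 < Z :=
    Finset.sum_pos (fun y _ => mul_pos (href0 y) (Real.exp_pos _)) Finset.univ_nonempty
  have hrelpos : ∀ y, 0 < πrel y := fun y => by
    rw [hπrel y]; exact div_pos (mul_pos (href0 y) (Real.exp_pos _)) hZpos
  have hrel1 : ∑ y, πrel y = 1 := by
    simp only [hπrel]
    rw [← Finset.sum_div, ← hZ, div_self (ne_of_gt hZpos)]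
  -- log(πrel y / πref y) = -lam * v y - log Z
  have hlog : ∀ y, Real.log (πrel y / πref y) = -lam * v y - Real.log Z := by
    intro y
    rw [hπrel y]
    have hf : πref y ≠ 0 := (href0 y).ne'
    have hz : Z ≠ 0 := hZpos.ne'
    have : πref y * Real.exp (-lam * v y) / Z / πref y = Real.exp (-lam * v y) / Z := by
      field_simp
    rw [this, Real.log_div (Real.exp_ne_zero _) (ne_of_gt hZpos), Real.log_exp]
  -- ε = -lam * ∑ πrel v - log Z
  have hεval : ε = -lam * (∑ y, πrel y * v y) - Real.log Z := by
    rw [← hKL]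
    have : ∀ y, πrel y * Real.log (πrel y / πref y)
        = -lam * (πrel y * v y) - Real.log Z * πrel y := by
      intro y; rw [hlog y]; ring
    rw [Finset.sum_congr rfl fun y _ => this y, Finset.sum_sub_distrib,
      ← Finset.mul_sum, ← Finset.mul_sum, hrel1, mul_one]
  -- decompose KL(p‖πref)
  have hdecomp : ∑ y, p y * Real.log (p y / πref y)
      = (∑ y, p y * Real.log (p y / πrel y)) + (-lam * (∑ y, p y * v y) - Real.log Z) := by
    have hterm : ∀ y, p y * Real.log (p y / πref y)
        = p y * Real.log (p y / πrel y) + (-lam * (p y * v y) - Real.log Z * p y) := by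
      intro y
      rcases eq_or_lt_of_le (hp y) with h | h
      · simp [← h]
      · have : Real.log (p y / πref y)
            = Real.log (p y / πrel y) + Real.log (πrel y / πref y) := by
          have hr := hrelpos y
          have hf := href0 y
          rw [← Real.log_mul (by positivity) (by positivity)]
          congr 1
          field_simp
        rw [this, hlog y]; ring
    rw [Finset.sum_congr rfl fun y _ => hterm y, Finset.sum_add_distrib,
      Finset.sum_sub_distrib, ← Finset.mul_sum, ← Finset.mul_sum, hp1, mul_one]
  have hgibbs : 0 ≤ ∑ y, p y * Real.log (p y / πrel y) :=
    gibbs_aux p πrel hp hrelpos (by rw [hp1, hrel1])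
  have : -lam * (∑ y, p y * v y) - Real.log Z
      ≤ -lam * (∑ y, πrel y * v y) - Real.log Z := by
    calc -lam * (∑ y, p y * v y) - Real.log Z
        ≤ ∑ y, p y * Real.log (p y / πref y) := by rw [hdecomp]; linarith
      _ ≤ ε := hpKL
      _ = _ := hεval
  have h2 : -lam * (∑ y, p y * v y) ≤ -lam * (∑ y, πrel y * v y) := by linarith
  nlinarith [h2]
end

section
/- Let π_rel be a fully supported probability distribution on a finite set Y, v : Y → ℝ, and ρ ≥ 0. Then the constrained supremum sup { E_{y∼π}[v(y)] : KL(π ‖ π_rel) ≤ ρ } is at most inf_{η>0} (ρ + log E_{y∼π_rel}[exp(η·v(y))]) / η. -/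
open Real Finset

/-- The constrained supremum of expected value is bounded by the dual
expression `(ρ + log E[exp(η v)]) / η` for every `η > 0`. -/
theorem stmt_6 {Y : Type*} [Fintype Y] [Nonempty Y]
    (πrel : Y → ℝ) (hrel0 : ∀ y, 0 < πrel y) (hrel1 : ∑ y, πrel y = 1)
    (v : Y → ℝ) (ρ : ℝ) (hρ : 0 ≤ ρ) :
    ∀ p : Y → ℝ, (∀ y, 0 ≤ p y) → (∑ y, p y = 1) →
      (∑ y, p y * Real.log (p y / πrel y)) ≤ ρ →
      ∀ η : ℝ, 0 < η →
        (∑ y, p y * v y)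
          ≤ (ρ + Real.log (∑ y, πrel y * Real.exp (η * v y))) / η := by
  intro p hp0 hp1 hKL η hη
  have hq0 : ∀ y : Y, 0 < πrel y * Real.exp (η * v y) :=
    fun y => mul_pos (hrel0 y) (Real.exp_pos _)
  set S : ℝ := ∑ y, πrel y * Real.exp (η * v y) with hS
  have hS0 : 0 < S := Finset.sum_pos (fun y _ => hq0 y) Finset.univ_nonempty
  rw [le_div_iff₀ hη]
  set T := Finset.univ.filter (fun y : Y => p y ≠ 0) with hT
  have hsum : ∑ y, (p y * v y * η - p y * Real.log (p y / πrel y)) ≤ Real.log S := by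
    have heq : ∑ y, (p y * v y * η - p y * Real.log (p y / πrel y))
        = ∑ y ∈ T, (p y * v y * η - p y * Real.log (p y / πrel y)) := by
      refine (Finset.sum_filter_of_ne ?_).symm
      intro y _ h
      intro hpe
      exact h (by simp [hpe])
    rw [heq]
    have hterm : ∀ y ∈ T, p y * v y * η - p y * Real.log (p y / πrel y)
        ≤ p y * Real.log S + (πrel y * Real.exp (η * v y)) / S - p y := by
      intro y hy
      have hpy : 0 < p y :=
        lt_of_le_of_ne (hp0 y) (Ne.symm ((Finset.mem_filter.mp hy).2))
      have hkey : p y * v y * η - p y * Real.log (p y / πrel y)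
          = p y * Real.log ((πrel y * Real.exp (η * v y)) / p y) := by
        rw [Real.log_div hpy.ne' (hrel0 y).ne',
          Real.log_div (hq0 y).ne' hpy.ne',
          Real.log_mul (hrel0 y).ne' (Real.exp_pos _).ne', Real.log_exp]
        ring
      rw [hkey]
      have h1 : Real.log ((πrel y * Real.exp (η * v y)) / p y)
          = Real.log ((πrel y * Real.exp (η * v y)) / (S * p y)) + Real.log S := by
        rw [Real.log_div (hq0 y).ne' hpy.ne',
          Real.log_div (hq0 y).ne' (mul_pos hS0 hpy).ne',
          Real.log_mul hS0.ne' hpy.ne']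
        ring
      have h2 : Real.log ((πrel y * Real.exp (η * v y)) / (S * p y))
          ≤ (πrel y * Real.exp (η * v y)) / (S * p y) - 1 :=
        Real.log_le_sub_one_of_pos (div_pos (hq0 y) (mul_pos hS0 hpy))
      have h3 : p y * ((πrel y * Real.exp (η * v y)) / (S * p y))
          = (πrel y * Real.exp (η * v y)) / S := by
        field_simp
      calc p y * Real.log ((πrel y * Real.exp (η * v y)) / p y)
          = p y * (Real.log ((πrel y * Real.exp (η * v y)) / (S * p y)) + Real.log S) := by
            rw [h1]
        _ ≤ p y * (((πrel y * Real.exp (η * v y)) / (S * p y) - 1) + Real.log S) := by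
            apply mul_le_mul_of_nonneg_left _ hpy.le
            linarith
        _ = p y * Real.log S + (πrel y * Real.exp (η * v y)) / S - p y := by
            rw [mul_add, mul_sub, h3]; ring
    have hTp : ∑ y ∈ T, p y = 1 := by
      rw [hT, Finset.sum_filter_ne_zero, hp1]
    have hTq : ∑ y ∈ T, (πrel y * Real.exp (η * v y)) ≤ S := by
      exact Finset.sum_le_sum_of_subset_of_nonneg (Finset.filter_subset _ _)
        (fun y _ _ => (hq0 y).le)
    calc ∑ y ∈ T, (p y * v y * η - p y * Real.log (p y / πrel y))
        ≤ ∑ y ∈ T, (p y * Real.log S + (πrel y * Real.exp (η * v y)) / S - p y) :=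
          Finset.sum_le_sum hterm
      _ = (∑ y ∈ T, p y) * Real.log S + (∑ y ∈ T, (πrel y * Real.exp (η * v y))) / S
            - ∑ y ∈ T, p y := by
          rw [Finset.sum_sub_distrib, Finset.sum_add_distrib, Finset.sum_mul,
            Finset.sum_div]
      _ ≤ Real.log S := by
          rw [hTp]
          have : (∑ y ∈ T, (πrel y * Real.exp (η * v y))) / S ≤ 1 :=
            (div_le_one hS0).mpr hTq
          linarith
  have hexp : ∑ y, (p y * v y * η - p y * Real.log (p y / πrel y))
      = (∑ y, p y * v y) * η - ∑ y, p y * Real.log (p y / πrel y) := by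
    rw [Finset.sum_sub_distrib, Finset.sum_mul]
  rw [hexp] at hsum
  linarith
end

section
/- Let π_rel be a fully supported probability distribution on a finite set Y, v : Y → ℝ, and for η ≥ 0 define π_η(y) ∝ π_rel(y)·exp(η·v(y)). Then the map η ↦ KL(π_η ‖ π_rel) is nondecreasing on [0, ∞), with value 0 at η = 0. -/
open Real Finset

/-!
Write `Z(η) = ∑ y, π_rel y · exp (η · v y)`, whose `k`-th derivative is `tiltedMoment k`, and
`B = Z' / Z` for the mean of `v` under `π_η`. Then `KL(π_η ‖ π_rel) = η · B(η) - log Z(η)` and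
`(log Z)' = B`. By Cauchy–Schwarz, `Z'^2 ≤ Z'' · Z`, so `B` is nondecreasing (`log Z` is convex).
For `0 ≤ a ≤ b` the mean value theorem gives `log Z(b) - log Z(a) ≤ B(b) (b - a)`, hence the
increment of the divergence is at least `a (B(b) - B(a)) ≥ 0`. At `η = 0`, `Z = ∑ π_rel = 1`.
-/

theorem monotoneOn_mul_sub_of_hasDerivAt {A B : ℝ → ℝ} (hA : ∀ x, HasDerivAt A (B x) x)
    (hB : Monotone B) : MonotoneOn (fun x => x * B x - A x) (Set.Ici 0) := by
  intro a ha b _ hab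
  have hAab : A b - A a ≤ B b * (b - a) :=
    (convex_Icc a b).image_sub_le_mul_sub_of_deriv_le
      (fun x _ => (hA x).continuousAt.continuousWithinAt)
      (fun x _ => (hA x).differentiableAt.differentiableWithinAt)
      (fun x hx => (hA x).deriv ▸ hB (interior_subset hx).2)
      a (Set.left_mem_Icc.2 hab) b (Set.right_mem_Icc.2 hab) hab
  have hBab : a * B a ≤ a * B b := mul_le_mul_of_nonneg_left (hB hab) ha
  dsimp only
  linarith

section Tilting

variable {Y : Type*} [Fintype Y] (w v : Y → ℝ)

noncomputable def tiltedMoment (k : ℕ) (η : ℝ) : ℝ := ∑ y, w y * v y ^ k * exp (η * v y)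

noncomputable def tiltedMean (η : ℝ) : ℝ := tiltedMoment w v 1 η / tiltedMoment w v 0 η

noncomputable def tilted (η : ℝ) (y : Y) : ℝ := w y * exp (η * v y) / tiltedMoment w v 0 η

theorem hasDerivAt_tiltedMoment (k : ℕ) (η : ℝ) :
    HasDerivAt (tiltedMoment w v k) (tiltedMoment w v (k + 1) η) η := by
  refine (HasDerivAt.fun_sum (u := univ) fun y _ =>
    ((hasDerivAt_mul_const (v y)).exp).const_mul (w y * v y ^ k)).congr_deriv ?_
  exact sum_congr rfl fun y _ => by ring

theorem tiltedMoment_one_sq_le (hw : ∀ y, 0 ≤ w y) (η : ℝ) :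
    tiltedMoment w v 1 η ^ 2 ≤ tiltedMoment w v 2 η * tiltedMoment w v 0 η :=
  sum_sq_le_sum_mul_sum_of_sq_le_mul univ
    (fun y _ => by have := hw y; positivity) (fun y _ => by have := hw y; positivity)
    (fun y _ => le_of_eq (by ring))

variable [Nonempty Y] {w}

theorem tiltedMoment_zero_pos (hw : ∀ y, 0 < w y) (η : ℝ) : 0 < tiltedMoment w v 0 η :=
  sum_pos (fun y _ => by have := hw y; positivity) univ_nonempty

theorem hasDerivAt_log_tiltedMoment_zero (hw : ∀ y, 0 < w y) (η : ℝ) :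
    HasDerivAt (fun η => log (tiltedMoment w v 0 η)) (tiltedMean w v η) η :=
  (hasDerivAt_tiltedMoment w v 0 η).log (tiltedMoment_zero_pos v hw η).ne'

theorem monotone_tiltedMean (hw : ∀ y, 0 < w y) : Monotone (tiltedMean w v) := by
  have hderiv (η : ℝ) : HasDerivAt (tiltedMean w v) ((tiltedMoment w v 2 η * tiltedMoment w v 0 η
      - tiltedMoment w v 1 η * tiltedMoment w v 1 η) / tiltedMoment w v 0 η ^ 2) η :=
    (hasDerivAt_tiltedMoment w v 1 η).div (hasDerivAt_tiltedMoment w v 0 η) (tiltedMoment_zero_pos v hw η).ne'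
  refine monotone_of_deriv_nonneg (fun η => (hderiv η).differentiableAt) fun η => ?_
  rw [(hderiv η).deriv]
  have := tiltedMoment_one_sq_le w v (fun y => (hw y).le) η
  exact div_nonneg (by nlinarith) (sq_nonneg _)

theorem sum_tilted_mul_log_div (hw : ∀ y, 0 < w y) (η : ℝ) :
    ∑ y, tilted w v η y * log (tilted w v η y / w y)
      = η * tiltedMean w v η - log (tiltedMoment w v 0 η) := by
  have hZ := (tiltedMoment_zero_pos v hw η).ne'
  have hlog (y : Y) : log (tilted w v η y / w y) = η * v y - log (tiltedMoment w v 0 η) := by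
    rw [tilted, div_right_comm, mul_div_cancel_left₀ _ (hw y).ne', log_div (exp_ne_zero _) hZ,
      log_exp]
  have hmass : ∑ y, tilted w v η y = 1 := by
    rw [← div_self hZ]
    simp only [tilted, ← sum_div, tiltedMoment, pow_zero, mul_one]
  have hmean : ∑ y, tilted w v η y * (η * v y) = η * tiltedMean w v η := by
    simp only [tilted, tiltedMean, tiltedMoment, mul_div_assoc', sum_div, mul_sum]
    exact sum_congr rfl fun y _ => by ring
  simp only [hlog, mul_sub, sum_sub_distrib, ← sum_mul, hmass, hmean, one_mul]

end Tilting

/-- The KL divergence of the tilted distribution from the base distribution is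
nondecreasing in `η ≥ 0` and vanishes at `η = 0`. -/
theorem stmt_11 {Y : Type*} [Fintype Y] [Nonempty Y]
    (πrel : Y → ℝ) (hrel0 : ∀ y, 0 < πrel y) (hrel1 : ∑ y, πrel y = 1)
    (v : Y → ℝ)
    (πt : ℝ → Y → ℝ)
    (hπt : ∀ η y, πt η y = πrel y * Real.exp (η * v y)
        / ∑ y', πrel y' * Real.exp (η * v y')) :
    MonotoneOn (fun η : ℝ => ∑ y, πt η y * Real.log (πt η y / πrel y))
      (Set.Ici 0)
    ∧ (∑ y, πt 0 y * Real.log (πt 0 y / πrel y)) = 0 := by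
  have hπ : πt = tilted πrel v := by
    ext η y
    simp [hπt, tilted, tiltedMoment]
  subst hπ
  simp only [sum_tilted_mul_log_div v hrel0]
  refine ⟨monotoneOn_mul_sub_of_hasDerivAt (hasDerivAt_log_tiltedMoment_zero v hrel0)
    (monotone_tiltedMean v hrel0), ?_⟩
  simp [tiltedMoment, hrel1]
end
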